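/- Let H₁ ⊂ L¹(μ) be a subspace that is closed in L_log (e.g. the L¹-part of a closed subalgebra H of L_log), and define for w ∈ L¹ real-valued: ‖w‖_{BMO} = inf{‖w − h‖_∞ : h ∈ H₁}. If w ∈ BMO (i.e. this infimum is finite), then the infimum is attained: there exists g ∈ H₁ with ‖w − g‖_∞ = ‖w‖_{BMO}. -/

import Mathlib

open MeasureTheory ENNReal Filter

variable {α : Type*} [MeasurableSpace α]

/-- Membership in the Orlicz space `L_log`. -/
def LlogMem (μ : Measure α) (f : α → ℂ) : Prop :=
  AEMeasurable f μ ∧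
    ∫⁻ x, ENNReal.ofReal (Real.log (1 + ‖f x‖)) ∂μ ≠ ⊤

/-- The BMO-norm `‖w‖_{BMO} = inf {‖w − h‖_∞ : h ∈ H₁}` (as a value in `ℝ≥0∞`). -/
noncomputable def bmoNorm (μ : Measure α) (H₁ : Set (α → ℂ)) (w : α → ℝ) : ℝ≥0∞ :=
  ⨅ (h : α → ℂ) (_ : h ∈ H₁), eLpNorm (fun x => (w x : ℂ) - h x) ⊤ μ

open Topology

/-!
Instead of Komlós's theorem we use the Hilbert space `L²`. For `c > ‖w‖_{BMO}` the functions
`w - h` with `h ∈ H₁` and `‖w - h‖_∞ ≤ c` form a nonempty convex subset of `L²` (on a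
probability space `L^∞ ⊂ L²`), and these sets decrease as `c ↓ ‖w‖_{BMO}`. By the
parallelogram law, near-minimisers of the `L²`-norm over this nested family form a Cauchy
sequence; call its limit `x`. `L²`-convergence implies `L¹`- and hence `L_log`-convergence,
so `g = w - x ∈ H₁`, and along an a.e. convergent subsequence `‖w - g‖_∞ = ‖x‖_∞` is at most
`‖w‖_{BMO}`.
-/

section Hilbert

variable {𝕜 E : Type*} [RCLike 𝕜] [NormedAddCommGroup E] [InnerProductSpace 𝕜 E]

theorem norm_sub_sq_le_of_le_norm_midpoint {x y : E} {r d : ℝ} (hd : 0 ≤ d)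
    (hmid : d ≤ ‖(2⁻¹ : 𝕜) • (x + y)‖) (hx : ‖x‖ ≤ r) (hy : ‖y‖ ≤ r) :
    ‖x - y‖ ^ 2 ≤ 4 * r ^ 2 - 4 * d ^ 2 := by
  have hxy : 2 * d ≤ ‖x + y‖ := by
    rw [norm_smul, norm_inv, RCLike.norm_ofNat] at hmid
    linarith
  have := parallelogram_law_with_norm 𝕜 x y
  nlinarith [norm_nonneg x, norm_nonneg y]

theorem exists_tendsto_of_antitone_of_midpoint_mem [CompleteSpace E] {S : ℕ → Set E}
    (hS : Antitone S) (hmid : ∀ n, ∀ x ∈ S n, ∀ y ∈ S n, (2⁻¹ : 𝕜) • (x + y) ∈ S n)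
    {R : ℝ} (hR : ∀ n, ∃ x ∈ S n, ‖x‖ ≤ R) :
    ∃ q : ℕ → E, (∀ n, q n ∈ S n) ∧ ∃ x, Tendsto q atTop (𝓝 x) := by
  set d : ℕ → ℝ := fun n => sInf (norm '' S n)
  have hne : ∀ n, (norm '' S n).Nonempty := fun n =>
    let ⟨x, hx, _⟩ := hR n; ⟨_, x, hx, rfl⟩
  have hbdd : ∀ n, BddBelow (norm '' S n) := fun n => ⟨0, by rintro _ ⟨x, -, rfl⟩; positivity⟩
  have hd_nonneg : ∀ n, 0 ≤ d n := fun n => le_csInf (hne n) (by rintro _ ⟨x, -, rfl⟩; positivity)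
  have hd_le : ∀ n, ∀ x ∈ S n, d n ≤ ‖x‖ := fun n x hx => csInf_le (hbdd n) ⟨x, hx, rfl⟩
  have hd_mono : Monotone d := fun m n hmn =>
    csInf_le_csInf (hbdd m) (hne n) (Set.image_mono (hS hmn))
  have hd_bdd : BddAbove (Set.range d) := ⟨R, by
    rintro _ ⟨n, rfl⟩
    obtain ⟨x, hx, hxR⟩ := hR n
    exact (hd_le n x hx).trans hxR⟩
  set δ := ⨆ n, d n
  have hdδ : ∀ n, d n ≤ δ := le_ciSup hd_bdd
  have hδ : Tendsto d atTop (𝓝 δ) := tendsto_atTop_ciSup hd_mono hd_bdd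
  have hq : ∀ n, ∃ x ∈ S n, ‖x‖ < d n + 1 / (n + 1) := fun n => by
    obtain ⟨_, ⟨x, hx, rfl⟩, hlt⟩ :=
      exists_lt_of_csInf_lt (hne n) (lt_add_of_pos_right (d n) Nat.one_div_pos_of_nat)
    exact ⟨x, hx, hlt⟩
  choose q hqS hqd using hq
  set b : ℕ → ℝ := fun N => √(4 * (δ + 1 / (N + 1)) ^ 2 - 4 * d N ^ 2)
  have hqb : ∀ n N, N ≤ n → ‖q n‖ ≤ δ + 1 / (N + 1) := fun n N hNn => by
    have : (1 : ℝ) / (n + 1) ≤ 1 / (N + 1) := Nat.one_div_le_one_div hNn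
    linarith [hqd n, hdδ n]
  have hcauchy : ∀ n m N, N ≤ n → N ≤ m → dist (q n) (q m) ≤ b N := fun n m N hn hm => by
    rw [dist_eq_norm, ← Real.sqrt_sq (norm_nonneg _)]
    exact Real.sqrt_le_sqrt <| norm_sub_sq_le_of_le_norm_midpoint (hd_nonneg N)
      (hd_le N _ (hmid N _ (hS hn (hqS n)) _ (hS hm (hqS m)))) (hqb n N hn) (hqb m N hm)
  have hb : Tendsto b atTop (𝓝 0) := by
    have h : Tendsto (fun N : ℕ => 4 * (δ + 1 / ((N : ℝ) + 1)) ^ 2 - 4 * d N ^ 2) atTop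
        (𝓝 (4 * (δ + 0) ^ 2 - 4 * δ ^ 2)) :=
      (((tendsto_const_nhds.add tendsto_one_div_add_atTop_nhds_zero_nat).pow 2).const_mul 4).sub
        ((hδ.pow 2).const_mul 4)
    simpa [b, Function.comp_def] using (Real.continuous_sqrt.tendsto _).comp h
  exact ⟨q, hqS, cauchySeq_tendsto_of_complete (cauchySeq_of_le_tendsto_0 b hcauchy hb)⟩

end Hilbert

section Orlicz

variable {E : Type*} [NormedAddCommGroup E] {μ : Measure α}

theorem Real.log_one_add_le_self {t : ℝ} (ht : 0 ≤ t) : Real.log (1 + t) ≤ t := by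
  linarith [Real.log_le_sub_one_of_pos (x := 1 + t) (by linarith)]

theorem llogMem_of_integrable {f : α → ℂ} (hf : Integrable f μ) : LlogMem μ f := by
  refine ⟨hf.aemeasurable, ne_top_of_le_ne_top hf.2.ne (lintegral_mono fun a => ?_)⟩
  rw [← ofReal_norm]
  exact ENNReal.ofReal_le_ofReal (Real.log_one_add_le_self (norm_nonneg _))

theorem integral_log_one_add_norm_le_integral_norm {f : α → E} (hf : Integrable f μ) :
    ∫ a, Real.log (1 + ‖f a‖) ∂μ ≤ ∫ a, ‖f a‖ ∂μ :=
  integral_mono_of_nonneg (ae_of_all _ fun a => Real.log_nonneg (by simp)) hf.norm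
    (ae_of_all _ fun a => Real.log_one_add_le_self (norm_nonneg _))

variable {p : ℝ≥0∞} [Fact (1 ≤ p)]

theorem Lp.integral_norm_le_norm [IsProbabilityMeasure μ] (f : Lp E p μ) :
    ∫ a, ‖f a‖ ∂μ ≤ ‖f‖ := by
  rw [integral_norm_eq_lintegral_enorm (Lp.aestronglyMeasurable f),
    ← eLpNorm_one_eq_lintegral_enorm, Lp.norm_def]
  exact ENNReal.toReal_mono (Lp.eLpNorm_ne_top f)
    (eLpNorm_le_eLpNorm_of_exponent_le Fact.out (Lp.aestronglyMeasurable f))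

theorem Lp.tendsto_integral_log_one_add_norm_sub [IsProbabilityMeasure μ] {q : ℕ → Lp E p μ}
    {x : Lp E p μ} (hq : Tendsto q atTop (𝓝 x)) :
    Tendsto (fun n => ∫ a, Real.log (1 + ‖x a - q n a‖) ∂μ) atTop (𝓝 0) := by
  refine squeeze_zero (fun n => integral_nonneg fun a => Real.log_nonneg (by simp))
    (fun n => ?_) ((tendsto_iff_norm_sub_tendsto_zero.1 hq).congr fun n => norm_sub_rev _ _)
  calc ∫ a, Real.log (1 + ‖x a - q n a‖) ∂μ = ∫ a, Real.log (1 + ‖(x - q n) a‖) ∂μ :=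
        integral_congr_ae <| (Lp.coeFn_sub x (q n)).mono fun a ha => by
          simp only [ha, Pi.sub_apply]
    _ ≤ ∫ a, ‖(x - q n) a‖ ∂μ := integral_log_one_add_norm_le_integral_norm
        ((Lp.memLp _).integrable Fact.out)
    _ ≤ ‖x - q n‖ := Lp.integral_norm_le_norm _

theorem Lp.eLpNorm_top_le_of_tendsto {q : ℕ → Lp E p μ} {x : Lp E p μ}
    (hq : Tendsto q atTop (𝓝 x)) {c : ℕ → ℝ≥0∞} {C : ℝ≥0∞} (hc : Tendsto c atTop (𝓝 C))
    (hqc : ∀ n, eLpNorm (q n) ∞ μ ≤ c n) : eLpNorm x ∞ μ ≤ C := by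
  obtain ⟨ns, hns, hae⟩ := (tendstoInMeasure_of_tendsto_Lp hq).exists_seq_tendsto_ae
  calc eLpNorm x ∞ μ ≤ atTop.liminf fun k => eLpNorm (q (ns k)) ∞ μ :=
        Lp.eLpNorm_exponent_top_lim_le_liminf_eLpNorm_exponent_top hae
    _ ≤ atTop.liminf fun k => c (ns k) := liminf_le_liminf (.of_forall fun k => hqc _)
    _ = C := (hc.comp hns.tendsto_atTop).liminf_eq

end Orlicz

theorem eLpNorm_inv_two_smul_add_le {𝕜 E : Type*} [RCLike 𝕜] [NormedAddCommGroup E]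
    [NormedSpace 𝕜 E] {μ : Measure α} {p : ℝ≥0∞} (hp : 1 ≤ p) {f g : α → E}
    (hf : AEStronglyMeasurable f μ) (hg : AEStronglyMeasurable g μ) {C : ℝ≥0∞}
    (hfC : eLpNorm f p μ ≤ C) (hgC : eLpNorm g p μ ≤ C) :
    eLpNorm ((2⁻¹ : 𝕜) • (f + g)) p μ ≤ C :=
  calc eLpNorm ((2⁻¹ : 𝕜) • (f + g)) p μ ≤ ‖(2⁻¹ : 𝕜)‖ₑ * eLpNorm (f + g) p μ :=
        eLpNorm_const_smul_le
    _ ≤ 2⁻¹ * (C + C) := by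
        rw [enorm_inv two_ne_zero, ← ofReal_norm, RCLike.norm_ofNat, ENNReal.ofReal_ofNat]
        gcongr
        exact (eLpNorm_add_le hf hg hp).trans (add_le_add hfC hgC)
    _ = C := by rw [mul_add, ← ENNReal.div_eq_inv_mul, ENNReal.add_halves]

section BMO

variable {μ : Measure α} {H₁ : Set (α → ℂ)} {w : α → ℝ}

def bmoApproxSet (μ : Measure α) (H₁ : Set (α → ℂ)) (w : α → ℝ) (c : ℝ≥0∞) : Set (Lp ℂ 2 μ) :=
  {q | ∃ h ∈ H₁, q =ᵐ[μ] (fun a => (w a : ℂ) - h a) ∧ eLpNorm q ∞ μ ≤ c}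

theorem bmoApproxSet_mono {c c' : ℝ≥0∞} (hcc' : c ≤ c') :
    bmoApproxSet μ H₁ w c ⊆ bmoApproxSet μ H₁ w c' :=
  fun _ ⟨h, hh, hqh, hqc⟩ => ⟨h, hh, hqh, hqc.trans hcc'⟩

theorem inv_two_smul_add_mem_bmoApproxSet (hadd : ∀ f ∈ H₁, ∀ g ∈ H₁, f + g ∈ H₁)
    (hsmul : ∀ (c : ℂ), ∀ f ∈ H₁, c • f ∈ H₁) {c : ℝ≥0∞} :
    ∀ q ∈ bmoApproxSet μ H₁ w c, ∀ q' ∈ bmoApproxSet μ H₁ w c,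
      (2⁻¹ : ℂ) • (q + q') ∈ bmoApproxSet μ H₁ w c := by
  rintro q ⟨h, hh, hqh, hqc⟩ q' ⟨h', hh', hqh', hqc'⟩
  have hae : ⇑((2⁻¹ : ℂ) • (q + q')) =ᵐ[μ] (2⁻¹ : ℂ) • (⇑q + ⇑q') :=
    (Lp.coeFn_smul _ _).trans ((Lp.coeFn_add q q').const_smul _)
  refine ⟨(2⁻¹ : ℂ) • (h + h'), hsmul _ _ (hadd _ hh _ hh'), ?_, ?_⟩
  · filter_upwards [hae, hqh, hqh'] with a ha h1 h2
    simp only [ha, Pi.smul_apply, Pi.add_apply, h1, h2, smul_eq_mul]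
    ring
  · rw [eLpNorm_congr_ae hae]
    exact eLpNorm_inv_two_smul_add_le le_top (Lp.aestronglyMeasurable q)
      (Lp.aestronglyMeasurable q') hqc hqc'

theorem exists_mem_bmoApproxSet_norm_le [IsProbabilityMeasure μ]
    (hL1 : ∀ f ∈ H₁, Integrable f μ) (hw : Integrable w μ) {c : ℝ≥0∞} (hc : c ≠ ⊤)
    (hwc : bmoNorm μ H₁ w < c) : ∃ q ∈ bmoApproxSet μ H₁ w c, ‖q‖ ≤ c.toReal := by
  obtain ⟨h, hh, hlt⟩ : ∃ h ∈ H₁, eLpNorm (fun a => (w a : ℂ) - h a) ∞ μ < c := by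
    simpa only [bmoNorm, iInf_lt_iff, exists_prop] using hwc
  have hmem : MemLp (fun a => (w a : ℂ) - h a) 2 μ :=
    MemLp.mono_exponent ⟨hw.ofReal.aestronglyMeasurable.sub (hL1 h hh).aestronglyMeasurable,
      hlt.trans_le le_top⟩ le_top
  refine ⟨hmem.toLp, ⟨h, hh, hmem.coeFn_toLp, ?_⟩, ?_⟩
  · exact (eLpNorm_congr_ae hmem.coeFn_toLp).trans_le hlt.le
  · rw [Lp.norm_toLp]
    exact ENNReal.toReal_mono hc
      ((eLpNorm_le_eLpNorm_of_exponent_le le_top hmem.1).trans hlt.le)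

theorem sub_mem_of_tendsto_of_mem_bmoApproxSet [IsProbabilityMeasure μ]
    (hclosed : ∀ (F : ℕ → α → ℂ) (f : α → ℂ), (∀ n, F n ∈ H₁) → LlogMem μ f →
      Integrable f μ →
      Tendsto (fun n => ∫ x, Real.log (1 + ‖F n x - f x‖) ∂μ) atTop (𝓝 0) → f ∈ H₁)
    (hw : Integrable w μ) {c : ℕ → ℝ≥0∞} {q : ℕ → Lp ℂ 2 μ}
    (hq : ∀ n, q n ∈ bmoApproxSet μ H₁ w (c n)) {x : Lp ℂ 2 μ} (hqx : Tendsto q atTop (𝓝 x)) :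
    (fun a => (w a : ℂ) - x a) ∈ H₁ := by
  choose h hH hqh _ using hq
  have hint : Integrable (fun a => (w a : ℂ) - x a) μ :=
    hw.ofReal.sub ((Lp.memLp x).integrable one_le_two)
  refine hclosed h _ hH (llogMem_of_integrable hint) hint
    ((Lp.tendsto_integral_log_one_add_norm_sub hqx).congr fun n => integral_congr_ae ?_)
  filter_upwards [hqh n] with a ha
  simp only [ha]
  ring_nf

end BMO

/-- If `H₁ ⊂ L¹` is a subspace closed in `L_log` and `w ∈ L¹` is real-valued with
finite BMO-norm, then the infimum defining `‖w‖_{BMO}` is attained. -/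
theorem stmt12 (μ : Measure α) [IsProbabilityMeasure μ]
    (H₁ : Set (α → ℂ))
    (hL1 : ∀ f ∈ H₁, Integrable f μ)
    (hadd : ∀ f ∈ H₁, ∀ g ∈ H₁, f + g ∈ H₁)
    (hsmul : ∀ (c : ℂ), ∀ f ∈ H₁, c • f ∈ H₁)
    -- `H₁` is closed in the topology of `L_log`
    (hclosed : ∀ (F : ℕ → α → ℂ) (f : α → ℂ), (∀ n, F n ∈ H₁) → LlogMem μ f →
      Integrable f μ →
      Tendsto (fun n => ∫ x, Real.log (1 + ‖F n x - f x‖) ∂μ)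
        atTop (nhds 0) → f ∈ H₁)
    (w : α → ℝ) (hw : Integrable w μ)
    (hbmo : bmoNorm μ H₁ w ≠ ⊤) :
    ∃ g ∈ H₁, eLpNorm (fun x => (w x : ℂ) - g x) ⊤ μ = bmoNorm μ H₁ w := by
  set B := bmoNorm μ H₁ w
  set c : ℕ → ℝ≥0∞ := fun n => B + ((n + 1 : ℕ) : ℝ≥0∞)⁻¹
  have hc : Tendsto c atTop (𝓝 B) := by
    have h := (tendsto_const_nhds (x := B)).add
      (ENNReal.tendsto_inv_nat_nhds_zero.comp (tendsto_add_atTop_nat 1))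
    rwa [add_zero] at h
  have hc_le : ∀ n, c n ≤ B + 1 := fun n =>
    add_le_add_right (ENNReal.inv_le_one.2 (by exact_mod_cast n.succ_pos)) B
  have hS : Antitone fun n => bmoApproxSet μ H₁ w (c n) := fun m n hmn => by
    refine bmoApproxSet_mono (add_le_add_right (ENNReal.inv_le_inv.2 ?_) B)
    exact_mod_cast Nat.succ_le_succ hmn
  have hR (n : ℕ) : ∃ q ∈ bmoApproxSet μ H₁ w (c n), ‖q‖ ≤ (B + 1).toReal := by
    have hB1 : B + 1 ≠ ⊤ := add_ne_top.2 ⟨hbmo, one_ne_top⟩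
    obtain ⟨q, hq, hqc⟩ := exists_mem_bmoApproxSet_norm_le hL1 hw (ne_top_of_le_ne_top hB1
      (hc_le n)) (ENNReal.lt_add_right hbmo (ENNReal.inv_ne_zero.2 (natCast_ne_top _)))
    exact ⟨q, hq, hqc.trans (ENNReal.toReal_mono hB1 (hc_le n))⟩
  obtain ⟨q, hqS, x, hqx⟩ := exists_tendsto_of_antitone_of_midpoint_mem hS
    (fun n => inv_two_smul_add_mem_bmoApproxSet hadd hsmul) hR
  have hg := sub_mem_of_tendsto_of_mem_bmoApproxSet hclosed hw hqS hqx
  refine ⟨_, hg, le_antisymm ?_ (iInf₂_le _ hg)⟩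
  simpa using Lp.eLpNorm_top_le_of_tendsto hqx hc fun n => let ⟨_, _, _, hqc⟩ := hqS n; hqc
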